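/- arXiv:1404.2044 — 5 statements merged into one kernel-verified Lean document; each statement's English description precedes it below -/
import Mathlib

section
/- If A and B are finite subsets of an abelian group G with |A+B| ≤ K|A|, then any dissociated subset Λ of B satisfies |Λ| ≪ K log|A|, i.e., dim(B) = O(K log|A|). -/
open Finset Pointwise

/-- A finite set `Λ` in an abelian group is dissociated if every `{-1,0,1}`-relation
`∑_{λ ∈ Λ} ε_λ • λ = 0` forces all coefficients `ε_λ` to vanish. -/
def Dissociated {G : Type*} [AddCommGroup G] (Λ : Finset G) : Prop :=
  ∀ ε : G → ℤ, (∀ g, ε g = -1 ∨ ε g = 0 ∨ ε g = 1) → (∀ g ∉ Λ, ε g = 0) →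
    ∑ g ∈ Λ, ε g • g = 0 → ∀ g, ε g = 0

/-!
Let `Λ ⊆ B` be dissociated with `n = |Λ|`. Its `k`-element subsets have pairwise distinct sums,
all lying in `k • Λ`, so `n.choose k ≤ |k • Λ|`, while Plünnecke–Ruzsa gives
`|k • Λ| ≤ K ^ k |A|`. If `n ≥ (8K + 1) k`, then `(8K) ^ k ≤ n.choose k`, whence `8 ^ k ≤ |A|`.
Taking `k = ⌊log₈ |A|⌋ + 1` rules this out, so `n < 9 K k = O(K log |A|)`.
-/

lemma Nat.pow_le_choose_of_mul_le {c : ℝ} {n k : ℕ} (hc : 0 ≤ c) (h : (c + 1) * k ≤ n) :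
    c ^ k ≤ n.choose k := by
  have hkn : k ≤ n := by exact_mod_cast (show (k : ℝ) ≤ n by nlinarith)
  have hck : c * k ≤ ((n + 1 - k : ℕ) : ℝ) := by
    rw [Nat.cast_sub (by omega)]
    push_cast
    linarith
  have hk : (0 : ℝ) < (k : ℝ) ^ k := by exact_mod_cast Nat.pow_self_pos
  calc c ^ k = (c * k) ^ k / (k : ℝ) ^ k := by
        rw [mul_pow, mul_div_assoc, div_self hk.ne', mul_one]
    _ ≤ ((n + 1 - k : ℕ) : ℝ) ^ k / k.factorial := by
        gcongr
        exact_mod_cast k.factorial_le_pow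
    _ ≤ n.choose k := Nat.pow_le_choose k n

lemma natLog_eight_add_one_le_three_mul_log {a : ℕ} (ha : 2 ≤ a) :
    (Nat.log 8 a + 1 : ℝ) ≤ 3 * Real.log a := by
  have hlog2 : 1 / 2 < Real.log 2 := by linarith [Real.log_two_gt_d9]
  have hloga : Real.log 2 ≤ Real.log a := Real.log_le_log (by norm_num) (by exact_mod_cast ha)
  have hlog8 : 1 ≤ Real.log 8 := by
    rw [Real.le_log_iff_exp_le (by norm_num)]
    linarith [Real.exp_one_lt_d9]
  have : (Nat.log 8 a : ℝ) ≤ Real.log a := by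
    refine (Real.natLog_le_logb a 8).trans ?_
    rw [Real.logb]
    push_cast
    exact div_le_self (by linarith) hlog8
  linarith

section

variable {G : Type*} [AddCommGroup G] [DecidableEq G]

lemma Finset.sum_mem_card_nsmul {S Λ : Finset G} (hS : S ⊆ Λ) : ∑ x ∈ S, x ∈ #S • Λ := by
  induction S using Finset.induction_on with
  | empty => simp
  | insert a S ha ih =>
    rw [sum_insert ha, card_insert_of_notMem ha, succ_nsmul']
    exact add_mem_add (hS (mem_insert_self a S)) (ih ((subset_insert a S).trans hS))

-- The `{-1,0,1}`-relation witnessing `∑ S = ∑ T` is `𝟙_S - 𝟙_T`.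
lemma Dissociated.addDissociated {Λ : Finset G} (hΛ : Dissociated Λ) :
    AddDissociated (Λ : Set G) := by
  intro S hS T hT hST
  simp only [Set.mem_ofPred_eq, coe_subset] at hS hT
  let ε : G → ℤ := fun g => (if g ∈ S then 1 else 0) - (if g ∈ T then 1 else 0)
  have indicator_sum : ∀ U ⊆ Λ, ∑ g ∈ Λ, (if g ∈ U then (1 : ℤ) else 0) • g = ∑ g ∈ U, g := by
    intro U hU
    simp only [ite_smul, one_smul, zero_smul, sum_ite_mem, inter_eq_right.mpr hU]
  have hε : ∀ g, ε g = 0 := by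
    refine hΛ ε (fun g => ?_) (fun g hg => ?_) ?_
    · by_cases hgS : g ∈ S <;> by_cases hgT : g ∈ T <;> simp [ε, hgS, hgT]
    · simp [ε, show g ∉ S from fun h => hg (hS h), show g ∉ T from fun h => hg (hT h)]
    · simp only [ε, sub_smul, sum_sub_distrib, indicator_sum S hS, indicator_sum T hT]
      exact sub_eq_zero.mpr hST
  ext g
  have hεg := hε g
  by_cases hgS : g ∈ S <;> by_cases hgT : g ∈ T <;> simp [ε, hgS, hgT] at hεg ⊢

lemma AddDissociated.choose_card_le_card_nsmul {Λ : Finset G}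
    (hΛ : AddDissociated (Λ : Set G)) (k : ℕ) : (#Λ).choose k ≤ #(k • Λ) := by
  rw [← card_powersetCard]
  refine card_le_card_of_injOn (fun S => ∑ x ∈ S, x) (fun S hS => ?_) (fun S hS T hT => ?_)
  · obtain ⟨hSΛ, rfl⟩ := mem_powersetCard.mp hS
    exact sum_mem_card_nsmul hSΛ
  · exact hΛ (coe_subset.mpr (mem_powersetCard.mp hS).1)
      (coe_subset.mpr (mem_powersetCard.mp hT).1)

lemma card_nsmul_le_of_card_add_le {A B : Finset G} {K : ℝ} (hA : A.Nonempty)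
    (hAB : (#(A + B) : ℝ) ≤ K * #A) (k : ℕ) : (#(k • B) : ℝ) ≤ K ^ k * #A := by
  have hA' : (0 : ℝ) < #A := by exact_mod_cast hA.card_pos
  have hPR := (NNRat.cast_le (K := ℝ)).mpr (pluennecke_ruzsa_inequality_nsmul_add hA B k)
  push_cast at hPR
  calc (#(k • B) : ℝ) ≤ (#(A + B) / #A : ℝ) ^ k * #A := hPR
    _ ≤ K ^ k * #A := by gcongr; rwa [div_le_iff₀ hA']

lemma Dissociated.eight_pow_le_card {A Λ : Finset G} {K : ℝ} (hΛ : Dissociated Λ)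
    (hA : A.Nonempty) (hK : 0 < K) (hAΛ : (#(A + Λ) : ℝ) ≤ K * #A) {k : ℕ}
    (hk : (8 * K + 1) * k ≤ #Λ) : (8 : ℝ) ^ k ≤ #A := by
  have hchoose : (8 * K) ^ k ≤ K ^ k * #A :=
    calc (8 * K) ^ k ≤ ((#Λ).choose k : ℝ) := Nat.pow_le_choose_of_mul_le (by positivity) hk
      _ ≤ #(k • Λ) := by exact_mod_cast hΛ.addDissociated.choose_card_le_card_nsmul k
      _ ≤ K ^ k * #A := card_nsmul_le_of_card_add_le hA hAΛ k
  rw [mul_pow, mul_comm] at hchoose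
  exact le_of_mul_le_mul_left hchoose (by positivity)

lemma one_le_of_card_add_le {A B : Finset G} {K : ℝ} (hA : A.Nonempty) (hB : B.Nonempty)
    (hAB : (#(A + B) : ℝ) ≤ K * #A) : 1 ≤ K := by
  have hA' : (0 : ℝ) < #A := by exact_mod_cast hA.card_pos
  have : (#A : ℝ) ≤ #(A + B) := by exact_mod_cast card_le_card_add_right hB
  nlinarith

end

/-- Sanders' theorem: if `|A+B| ≤ K|A|` then every dissociated subset of `B`
has cardinality `O(K log |A|)`, i.e. `dim B ≪ K log |A|`. -/
theorem stmt0 :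
    ∃ C : ℝ, 0 < C ∧ ∀ (G : Type*) [AddCommGroup G] [DecidableEq G]
      (A B Λ : Finset G) (K : ℝ),
      2 ≤ A.card → ((A + B).card : ℝ) ≤ K * A.card →
      Λ ⊆ B → Dissociated Λ →
      (Λ.card : ℝ) ≤ C * K * Real.log A.card := by
  refine ⟨27, by norm_num, fun G _ _ A B Λ K hA2 hAB hΛB hΛ => ?_⟩
  have hA : A.Nonempty := card_pos.mp (by omega)
  rcases Λ.eq_empty_or_nonempty with rfl | hΛne
  · have hA' : (0 : ℝ) < #A := by exact_mod_cast hA.card_pos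
    have hK : 0 ≤ K := by nlinarith [(#(A + B)).cast_nonneg (α := ℝ)]
    simpa using mul_nonneg (by positivity : (0 : ℝ) ≤ 27 * K) (Real.log_natCast_nonneg #A)
  have hAΛ : (#(A + Λ) : ℝ) ≤ K * #A :=
    le_trans (by exact_mod_cast card_le_card (add_subset_add_left hΛB)) hAB
  have hK : 1 ≤ K := one_le_of_card_add_le hA hΛne hAΛ
  set k := Nat.log 8 #A + 1
  have hA_lt : (#A : ℝ) < 8 ^ k := by exact_mod_cast Nat.lt_pow_succ_log_self (by norm_num) #A
  have hΛ_lt : (#Λ : ℝ) < (8 * K + 1) * k :=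
    lt_of_not_ge fun h => (hΛ.eight_pow_le_card hA (by linarith) hAΛ h).not_gt hA_lt
  have hk : (k : ℝ) ≤ 3 * Real.log #A := by
    push_cast [k]
    exact natLog_eight_add_one_le_three_mul_log hA2
  nlinarith
end

section
/- For any finite subset A of an abelian group and positive integers k, l, one has ∑_{s ∈ G^{k-1}} ∑_{t ∈ G^{l-1}} E(A_s, A_t) = E_{k+l}(A), where A_s = A ∩ (A - s_1) ∩ ... ∩ (A - s_{k-1}). -/
open Finset

variable {G : Type*} [AddCommGroup G] [Fintype G] [DecidableEq G]

/-- `(A ∘ A)(x) = |A ∩ (A − x)| = |{a ∈ A : a + x ∈ A}|`. -/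
def corr (A : Finset G) (x : G) : ℕ := (A.filter fun a => a + x ∈ A).card

/-- For a tuple `s = (s_1, …, s_m)`, `fib A s = A ∩ (A − s_1) ∩ ⋯ ∩ (A − s_m)`. -/
def fib (A : Finset G) {m : ℕ} (s : Fin m → G) : Finset G :=
  A.filter fun a => ∀ i, a + s i ∈ A

/-- The additive energy `E(A,B) = |{(a₁,b₁,a₂,b₂) : a₁ + b₁ = a₂ + b₂}|`. -/
def energy (A B : Finset G) : ℕ :=
  (((A ×ˢ B) ×ˢ A ×ˢ B).filter fun p => p.1.1 + p.1.2 = p.2.1 + p.2.2).card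

/-!
Writing `E(B, C) = ∑ₓ (B∘B)(x) (C∘C)(x)` (a quadruple with `b₁ + c₁ = b₂ + c₂` is determined by
`x = b₁ - b₂`, `b₂` and `c₁`), both sides become sums over `x`, and it suffices that
`∑_{s ∈ G^m} (A_s∘A_s)(x) = (A∘A)(x)^{m+1}`. The left side counts pairs `(a, s)` with
`a, a + x ∈ A` and `a + sᵢ, a + x + sᵢ ∈ A` for all `i`; for fixed `a` each `sᵢ` ranges over a
translate of `A ∩ (A - x)`.
-/

lemma energy_eq_sum_corr_mul (B C : Finset G) :
    energy B C = ∑ x : G, corr B x * corr C x := by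
  have shift {b₁ c₁ b₂ c₂ : G} (h : b₁ + c₁ = b₂ + c₂) : c₁ + (b₁ - b₂) = c₂ := by
    rw [← add_sub_assoc, add_comm c₁, h, add_sub_cancel_left]
  have hsigma : energy B C =
      #(univ.sigma fun x => B.filter (· + x ∈ B) ×ˢ C.filter (· + x ∈ C)) := by
    refine card_nbij' (fun p => ⟨p.1.1 - p.2.1, (p.2.1, p.1.2)⟩)
      (fun q => ((q.2.1 + q.1, q.2.2), (q.2.1, q.2.2 + q.1))) ?_ ?_ ?_ ?_
    · rintro ⟨⟨b₁, c₁⟩, b₂, c₂⟩ h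
      have := shift (mem_filter.1 (mem_coe.1 h)).2
      simp_all
    · rintro ⟨x, b, c⟩ h
      simp_all
      abel
    · rintro ⟨⟨b₁, c₁⟩, b₂, c₂⟩ h
      simp [shift (mem_filter.1 (mem_coe.1 h)).2]
    · rintro ⟨x, b, c⟩ -
      simp
  rw [hsigma, card_sigma]
  simp only [card_product, corr]

lemma card_shift_eq_corr (A : Finset G) (a x : G) :
    #(univ.filter fun y => a + y ∈ A ∧ a + y + x ∈ A) = corr A x :=
  card_equiv (Equiv.addLeft a) (by simp)

lemma sum_corr_fib (A : Finset G) (m : ℕ) (x : G) :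
    ∑ s : Fin m → G, corr (fib A s) x = corr A x ^ (m + 1) := by
  set shifts : G → Finset G := fun a => univ.filter fun y => a + y ∈ A ∧ a + y + x ∈ A
  have hcorr (s : Fin m → G) : corr (fib A s) x =
      #((A.filter (· + x ∈ A)).filter fun a => s ∈ Fintype.piFinset fun _ => shifts a) := by
    unfold corr fib
    congr 1
    ext a
    simp only [shifts, mem_filter, add_right_comm, Fintype.mem_piFinset, mem_univ, true_and,
      forall_and]
    exact and_and_and_comm
  calc ∑ s : Fin m → G, corr (fib A s) x
      = ∑ a ∈ A.filter (· + x ∈ A), #(Fintype.piFinset fun _ : Fin m => shifts a) := by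
        simp_rw [hcorr, card_filter]
        rw [sum_comm]
        simp_rw [sum_boole, filter_mem_eq_inter, univ_inter, Nat.cast_id]
    _ = corr A x ^ (m + 1) := by
        simp_rw [Fintype.card_piFinset_const, shifts, card_shift_eq_corr, sum_const, smul_eq_mul,
          pow_succ', corr]

/-- `∑_{s ∈ G^{k-1}} ∑_{t ∈ G^{l-1}} E(A_s, A_t) = E_{k+l}(A)`, where
`E_m(A) = ∑_x (A ∘ A)(x)^m` and `A_s = A ∩ (A − s_1) ∩ ⋯ ∩ (A − s_{k-1})`. -/
theorem stmt3 (A : Finset G) (k l : ℕ) (hk : 1 ≤ k) (hl : 1 ≤ l) :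
    ∑ s : Fin (k - 1) → G, ∑ t : Fin (l - 1) → G, energy (fib A s) (fib A t)
      = ∑ x : G, corr A x ^ (k + l) := by
  calc ∑ s : Fin (k - 1) → G, ∑ t : Fin (l - 1) → G, energy (fib A s) (fib A t)
      = ∑ x : G, (∑ s : Fin (k - 1) → G, corr (fib A s) x) *
          ∑ t : Fin (l - 1) → G, corr (fib A t) x := by
        simp_rw [energy_eq_sum_corr_mul, Finset.sum_mul_sum]
        exact sum_comm_cycle
    _ = ∑ x : G, corr A x ^ (k + l) := by
        simp_rw [sum_corr_fib, ← pow_add, Nat.sub_add_cancel hk, Nat.sub_add_cancel hl]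
end

section
/- Let M be a finite subset of a finite abelian group with M = X ∪ D where D is dissociated. Then for every integer s ≥ 1, T_s(M) ≤ C^s s^s |D|^s + 2^{2s} |X|^{2s-1} for some absolute constant C > 0. -/
open Finset

def Tk {G : Type*} [AddCommGroup G] [DecidableEq G] (k : ℕ) (A : Finset G) : ℕ :=
  (((Fintype.piFinset fun _ : Fin k => A) ×ˢ Fintype.piFinset fun _ : Fin k => A).filter
    fun p => ∑ i, p.1 i = ∑ i, p.2 i).card

/-!
By Parseval, `|G| · T_s(A) = ∑_ψ |∑_{a ∈ A} ψ a|^{2s}`. Splitting `M` into the disjoint sets `X` and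
`D \ X`, the pointwise bound `|α + β|^{2s} ≤ 2^{2s-1} (|α|^{2s} + |β|^{2s})` reduces the claim to
`T_s(X) ≤ |X|^{2s-1}` (a solution is determined by all its entries but one) and to Rudin's
inequality `T_s(D) ≤ (12 s |D|)^s`.

For Rudin's inequality, bound `exp (Re (z ψ(d)))` by `cosh |z|` plus a term linear in `ψ(d)`.
Multiplying over `d ∈ D` and averaging over `ψ`, dissociativity kills every cross term, which
leaves the sub-Gaussian bound `∑_ψ exp (Re (z ∑_{d ∈ D} ψ d)) ≤ |G| exp (|z|² |D| / 2)`; the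
moments follow by evaluating it at the optimal `|z|`.
-/

open Real
open scoped Nat

lemma Real.pow_two_mul_le_factorial_mul_cosh (x : ℝ) (k : ℕ) :
    x ^ (2 * k) ≤ (2 * k)! * cosh x := by
  have h := le_hasSum (Real.hasSum_cosh x) k fun n _ ↦ by
    have : 0 ≤ x ^ (2 * n) := (even_two_mul n).pow_nonneg x
    positivity
  exact ((div_le_iff₀ (by positivity)).1 h).trans_eq (mul_comm _ _)

lemma Complex.exp_re_le_cosh_norm_add (z : ℂ) :
    Real.exp z.re ≤ Real.cosh ‖z‖ + Real.sinh ‖z‖ / ‖z‖ * z.re := by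
  set t := z.re / ‖z‖
  have hz : z.re = t * ‖z‖ :=
    (div_mul_cancel_of_imp fun h ↦ by rw [norm_eq_zero.1 h, zero_re]).symm
  have ht : |t| ≤ 1 := by
    rw [abs_div, abs_norm]; exact div_le_one_of_le₀ (abs_re_le_norm z) (norm_nonneg z)
  calc Real.exp z.re = Real.exp (t * ‖z‖) := by rw [← hz]
    _ ≤ Real.cosh ‖z‖ + t * Real.sinh ‖z‖ := exp_mul_le_cosh_add_mul_sinh ht _
    _ = Real.cosh ‖z‖ + Real.sinh ‖z‖ / ‖z‖ * z.re := by simp only [t]; ring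

lemma Finset.sum_pow_le_of_sum_exp_le {ι : Type*} (t : Finset ι) (f : ι → ℝ) {N σ2 : ℝ}
    (hσ2 : 0 < σ2) (h : ∀ l : ℝ, ∑ i ∈ t, Real.exp (l * f i) ≤ N * Real.exp (l ^ 2 * σ2 / 2))
    {s : ℕ} (hs : s ≠ 0) : ∑ i ∈ t, f i ^ (2 * s) ≤ N * (2 * s * σ2) ^ s * Real.exp s := by
  have hN : 0 ≤ N := by simpa using (sum_nonneg fun i _ ↦ (exp_pos _).le).trans (h 0)
  -- the `l` balancing `(2s)! / l ^ (2s)` against `exp (l ^ 2 * σ2 / 2)`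
  set l := √(2 * s / σ2)
  have hl2 : l ^ 2 = 2 * s / σ2 := sq_sqrt (by positivity)
  have hexp : ∀ l' : ℝ, l' ^ 2 = l ^ 2 → ∑ i ∈ t, Real.exp (l' * f i) ≤ N * Real.exp s :=
    fun l' hl' ↦ by
      simpa only [hl', hl2, show 2 * (s : ℝ) / σ2 * σ2 / 2 = s by field_simp] using h l'
  have hmoment : (2 * s / σ2) ^ s * ∑ i ∈ t, f i ^ (2 * s) ≤ (2 * s)! * (N * Real.exp s) :=
    calc (2 * s / σ2) ^ s * ∑ i ∈ t, f i ^ (2 * s) = ∑ i ∈ t, (l * f i) ^ (2 * s) := by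
          simp_rw [mul_sum, mul_pow, pow_mul l, hl2]
      _ ≤ ∑ i ∈ t, (2 * s)! * Real.cosh (l * f i) :=
          sum_le_sum fun i _ ↦ pow_two_mul_le_factorial_mul_cosh _ _
      _ = (2 * s)! / 2 * (∑ i ∈ t, Real.exp (l * f i) + ∑ i ∈ t, Real.exp (-l * f i)) := by
          rw [← sum_add_distrib, mul_sum]
          exact sum_congr rfl fun i _ ↦ by rw [cosh_eq, neg_mul]; ring
      _ ≤ (2 * s)! / 2 * (N * Real.exp s + N * Real.exp s) := by
          gcongr <;> exact hexp _ (by ring)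
      _ = (2 * s)! * (N * Real.exp s) := by ring
  have hfact : ((2 * s)! : ℝ) ≤ (2 * s / σ2) ^ s * (2 * s * σ2) ^ s := by
    rw [← mul_pow, show 2 * s / σ2 * (2 * s * σ2) = (2 * s : ℝ) ^ 2 by field_simp, ← pow_mul]
    exact_mod_cast Nat.factorial_le_pow _
  have hpos : 0 < (2 * s / σ2 : ℝ) ^ s := by positivity
  refine le_of_mul_le_mul_left (hmoment.trans ?_) hpos
  calc ((2 * s)! : ℝ) * (N * Real.exp s)
      ≤ (2 * s / σ2) ^ s * (2 * s * σ2) ^ s * (N * Real.exp s) := by gcongr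
    _ = _ := by ring

section Dual

variable {H : Type*} [AddCommGroup H] [Fintype H]

lemma AddDissociated.sum_exp_sum_re_le (c : AddChar H ℂ → ℂ)
    (hc : AddDissociated {ψ | c ψ ≠ 0}) :
    ∑ a, Real.exp (∑ ψ, (c ψ * ψ a).re) ≤
      Fintype.card H * Real.exp ((∑ ψ, ‖c ψ‖ ^ 2) / 2) := by
  set d : AddChar H ℂ → ℂ := fun ψ ↦ (Real.sinh ‖c ψ‖ / ‖c ψ‖ : ℝ) * c ψ
  have hd : AddDissociated {ψ | d ψ ≠ 0} :=
    hc.subset fun _ ↦ right_ne_zero_of_mul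
  calc ∑ a, Real.exp (∑ ψ, (c ψ * ψ a).re)
      ≤ ∑ a : H, ∏ ψ, (Real.cosh ‖c ψ‖ + (d ψ * ψ a).re) := by
        refine sum_le_sum fun a _ ↦ ?_
        rw [Real.exp_sum]
        refine prod_le_prod (fun ψ _ ↦ (exp_pos _).le) fun ψ _ ↦ ?_
        have := (c ψ * ψ a).exp_re_le_cosh_norm_add
        rwa [norm_mul, AddChar.norm_apply, mul_one, ← Complex.re_ofReal_mul, ← mul_assoc] at this
    _ = Fintype.card H * ∏ ψ, Real.cosh ‖c ψ‖ := by
        rw [← hd.randomisation, Fintype.card_mul_expect]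
    _ ≤ Fintype.card H * Real.exp ((∑ ψ, ‖c ψ‖ ^ 2) / 2) := by
        rw [sum_div, Real.exp_sum]
        gcongr with ψ
        exact cosh_le_exp_half_sq _

lemma AddDissociated.sum_exp_re_mul_sum_le {Λ : Finset (AddChar H ℂ)}
    (hΛ : AddDissociated (Λ : Set (AddChar H ℂ))) (z : ℂ) :
    ∑ a, Real.exp (z * ∑ χ ∈ Λ, χ a).re ≤ Fintype.card H * Real.exp (‖z‖ ^ 2 * #Λ / 2) := by
  classical
  set c : AddChar H ℂ → ℂ := fun χ ↦ if χ ∈ Λ then z else 0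
  have hc : AddDissociated {ψ | c ψ ≠ 0} :=
    hΛ.subset fun ψ hψ ↦ by by_contra h; exact hψ (if_neg h)
  convert hc.sum_exp_sum_re_le c using 3 with a
  · simp only [c, ite_mul, zero_mul, ← Complex.re_sum, sum_ite_mem, univ_inter, mul_sum]
  · simp [c, apply_ite norm, mul_comm]

lemma AddDissociated.sum_norm_sum_pow_le {Λ : Finset (AddChar H ℂ)}
    (hΛ : AddDissociated (Λ : Set (AddChar H ℂ))) {s : ℕ} (hs : s ≠ 0) :
    ∑ a, ‖∑ χ ∈ Λ, χ a‖ ^ (2 * s) ≤ Fintype.card H * (12 * s * #Λ) ^ s := by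
  obtain rfl | hΛne := Λ.eq_empty_or_nonempty
  · simp [hs]
  set N : ℝ := (Fintype.card H : ℝ)
  set f : H → ℂ := fun a ↦ ∑ χ ∈ Λ, χ a
  have hmoment (u : ℂ) (hu : ‖u‖ = 1) :
      ∑ a, (u * f a).re ^ (2 * s) ≤ N * (2 * s * #Λ) ^ s * Real.exp s := by
    refine sum_pow_le_of_sum_exp_le _ _ (by simpa using hΛne.card_pos) (fun l ↦ ?_) hs
    have h := hΛ.sum_exp_re_mul_sum_le (l * u)
    simp_rw [mul_assoc, Complex.re_ofReal_mul, norm_mul, hu, mul_one, Complex.norm_real,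
      Real.norm_eq_abs, sq_abs] at h
    exact h
  -- `(1 * w).re = w.re` and `(-I * w).re = w.im`, so `hmoment` bounds both
  have hnorm (w : ℂ) :
      ‖w‖ ^ (2 * s) ≤ 2 ^ (s - 1) * ((1 * w).re ^ (2 * s) + (-Complex.I * w).re ^ (2 * s)) := by
    simpa [pow_mul, Complex.sq_norm, Complex.normSq_apply, ← sq] using
      add_pow_le (sq_nonneg w.re) (sq_nonneg w.im) s
  calc ∑ a, ‖f a‖ ^ (2 * s)
      ≤ 2 ^ (s - 1) * (∑ a, (1 * f a).re ^ (2 * s) + ∑ a, (-Complex.I * f a).re ^ (2 * s)) := by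
        rw [← sum_add_distrib, mul_sum]; exact sum_le_sum fun a _ ↦ hnorm (f a)
    _ ≤ 2 ^ (s - 1) * (2 * (N * (2 * s * #Λ) ^ s * Real.exp s)) := by
        gcongr 2 ^ (s - 1) * ?_
        exact (add_le_add (hmoment 1 (by simp)) (hmoment _ (by simp))).trans_eq (by ring)
    _ = N * (2 * s * #Λ) ^ s * 2 ^ s * Real.exp 1 ^ s := by
        rw [← mul_assoc, ← pow_succ, Nat.sub_add_cancel (Nat.one_le_iff_ne_zero.2 hs), exp_one_pow]
        ring
    _ ≤ N * (2 * s * #Λ) ^ s * 2 ^ s * 3 ^ s := by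
        gcongr; exact exp_one_lt_three.le
    _ = N * (12 * s * #Λ) ^ s := by
        rw [mul_assoc N, mul_assoc N, ← mul_pow, ← mul_pow]; ring_nf

end Dual

lemma AddChar.map_sum_eq_prod {A M ι : Type*} [AddCommMonoid A] [CommMonoid M]
    (ψ : AddChar A M) (t : Finset ι) (g : ι → A) : ψ (∑ i ∈ t, g i) = ∏ i ∈ t, ψ (g i) := by
  simpa [← ofAdd_sum] using map_prod ψ.toMonoidHom (fun i ↦ Multiplicative.ofAdd (g i)) t

lemma Dissociated.addDissociated_s12 {G : Type*} [AddCommGroup G] {D : Finset G}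
    (hD : Dissociated D) : AddDissociated (D : Set G) := by
  classical
  intro t (ht : (t : Set G) ⊆ D) u (hu : (u : Set G) ⊆ D) (htu : ∑ x ∈ t, x = ∑ x ∈ u, x)
  set ε : G → ℤ := fun g ↦ (if g ∈ t then 1 else 0) - if g ∈ u then 1 else 0
  have hsign (g : G) : ε g = -1 ∨ ε g = 0 ∨ ε g = 1 := by simp only [ε]; split_ifs <;> simp
  have hsupp (g : G) (hg : g ∉ D) : ε g = 0 := by
    simp [ε, show g ∉ t from fun h ↦ hg (ht h), show g ∉ u from fun h ↦ hg (hu h)]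
  have hsum : ∑ g ∈ D, ε g • g = 0 := by
    simp only [ε, sub_smul, ite_smul, one_smul, zero_smul, sum_sub_distrib, ← sum_filter,
      filter_mem_eq_inter, inter_eq_right.2 (coe_subset.1 ht), inter_eq_right.2 (coe_subset.1 hu),
      htu, sub_self]
  ext g
  have := hD ε hsign hsupp hsum g
  simp only [ε] at this
  split_ifs at this <;> simp_all

lemma Tk_le_card_pow {G : Type*} [AddCommGroup G] [DecidableEq G] (A : Finset G) {s : ℕ}
    (hs : s ≠ 0) : Tk s A ≤ #A ^ (2 * s - 1) := by
  obtain ⟨k, rfl⟩ := Nat.exists_eq_succ_of_ne_zero hs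
  have hhead {p : (Fin (k + 1) → G) × (Fin (k + 1) → G)} (hp : ∑ i, p.1 i = ∑ i, p.2 i) :
      p.2 0 = ∑ i, p.1 i - ∑ i, Fin.tail p.2 i := by
    rw [hp, Fin.sum_univ_succ, Fin.tail_def, add_sub_cancel_right]
  calc Tk (k + 1) A
      ≤ #((Fintype.piFinset fun _ : Fin (k + 1) ↦ A) ×ˢ Fintype.piFinset fun _ : Fin k ↦ A) := by
        refine card_le_card_of_injOn (fun p ↦ (p.1, Fin.tail p.2)) (fun p hp ↦ ?_)
          fun p hp q hq hpq ↦ ?_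
        · simp only [coe_filter, mem_product, Fintype.mem_piFinset, Set.mem_ofPred_eq] at hp
          simp [hp.1.1, Fin.tail, hp.1.2]
        · simp only [coe_filter, Set.mem_ofPred_eq, Prod.mk.injEq] at hp hq hpq
          refine Prod.ext hpq.1 ?_
          rw [← Fin.cons_self_tail p.2, ← Fin.cons_self_tail q.2, hhead hp.2, hhead hq.2, hpq.1,
            hpq.2]
    _ = #A ^ (2 * (k + 1) - 1) := by
        rw [card_product, Fintype.card_piFinset_const, Fintype.card_piFinset_const, ← pow_add]
        congr 1; omega

section Fourier

variable {G : Type*} [AddCommGroup G] [Fintype G] [DecidableEq G]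

lemma card_mul_Tk_eq_sum_norm_pow (A : Finset G) (s : ℕ) :
    (Fintype.card G : ℝ) * Tk s A = ∑ ψ : AddChar G ℂ, ‖∑ a ∈ A, ψ a‖ ^ (2 * s) := by
  set P := Fintype.piFinset fun _ : Fin s ↦ A
  have hpow (ψ : AddChar G ℂ) : (∑ a ∈ A, ψ a) ^ s = ∑ p ∈ P, ψ (∑ i, p i) := by
    simp_rw [sum_pow', AddChar.map_sum_eq_prod]; rfl
  have hnorm (ψ : AddChar G ℂ) :
      ((‖∑ a ∈ A, ψ a‖ ^ (2 * s) : ℝ) : ℂ) = ∑ p ∈ P ×ˢ P, ψ (∑ i, p.1 i - ∑ i, p.2 i) := by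
    rw [pow_mul, Complex.ofReal_pow, Complex.ofReal_pow, ← Complex.mul_conj', mul_pow, ← map_pow,
      hpow, map_sum, sum_mul_sum, ← sum_product']
    simp_rw [← AddChar.map_neg_eq_conj, ← AddChar.map_add_eq_mul, sub_eq_add_neg]
  apply Complex.ofReal_injective
  rw [Complex.ofReal_sum]
  simp_rw [hnorm]
  push_cast
  rw [sum_comm]
  simp_rw [AddChar.sum_apply_eq_ite, sub_eq_zero]
  rw [sum_ite, sum_const_zero, add_zero, sum_const, nsmul_eq_mul, Tk, mul_comm]

lemma Tk_union_le {A B : Finset G} (hAB : Disjoint A B) (s : ℕ) :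
    (Tk s (A ∪ B) : ℝ) ≤ 2 ^ (2 * s - 1) * (Tk s A + Tk s B) := by
  have hN : (0 : ℝ) < Fintype.card G := by exact_mod_cast Fintype.card_pos
  refine le_of_mul_le_mul_left ?_ hN
  calc (Fintype.card G : ℝ) * Tk s (A ∪ B)
      = ∑ ψ : AddChar G ℂ, ‖∑ a ∈ A, ψ a + ∑ b ∈ B, ψ b‖ ^ (2 * s) := by
        rw [card_mul_Tk_eq_sum_norm_pow]; simp_rw [sum_union hAB]
    _ ≤ ∑ ψ : AddChar G ℂ,
          2 ^ (2 * s - 1) * (‖∑ a ∈ A, ψ a‖ ^ (2 * s) + ‖∑ b ∈ B, ψ b‖ ^ (2 * s)) :=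
        sum_le_sum fun ψ _ ↦ (pow_le_pow_left₀ (norm_nonneg _) (norm_add_le _ _) _).trans
          (add_pow_le (norm_nonneg _) (norm_nonneg _) _)
    _ = Fintype.card G * (2 ^ (2 * s - 1) * (Tk s A + Tk s B)) := by
        rw [← mul_sum, sum_add_distrib, ← card_mul_Tk_eq_sum_norm_pow,
          ← card_mul_Tk_eq_sum_norm_pow]
        ring

lemma AddDissociated.Tk_le {D : Finset G} (hD : AddDissociated (D : Set G)) {s : ℕ}
    (hs : s ≠ 0) :
    (Tk s D : ℝ) ≤ (12 * s * #D) ^ s := by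
  -- the randomisation lemma lives on the dual group, so view `D` inside the double dual
  set Λ := D.map ⟨AddChar.doubleDualEmb, AddChar.doubleDualEmb_injective⟩
  have hΛ : AddDissociated (Λ : Set (AddChar (AddChar G ℂ) ℂ)) := by
    rw [coe_map, Function.Embedding.coeFn_mk, ← AddChar.coe_doubleDualEquiv,
      ← AddEquiv.coe_toEquiv, Equiv.image_eq_preimage_symm]
    exact (AddEquiv.addDissociated_preimage AddChar.doubleDualEquiv.symm).2 hD
  have hN : (0 : ℝ) < Fintype.card G := by exact_mod_cast Fintype.card_pos
  refine le_of_mul_le_mul_left ?_ hN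
  calc (Fintype.card G : ℝ) * Tk s D = ∑ ψ : AddChar G ℂ, ‖∑ χ ∈ Λ, χ ψ‖ ^ (2 * s) := by
        simp [card_mul_Tk_eq_sum_norm_pow, Λ]
    _ ≤ Fintype.card (AddChar G ℂ) * (12 * s * #Λ) ^ s := hΛ.sum_norm_sum_pow_le hs
    _ = Fintype.card G * (12 * s * #D) ^ s := by rw [AddChar.card_eq, card_map]

end Fourier

/-- If `M = X ∪ D` with `D` dissociated (in a finite abelian group), then
`T_s(M) ≤ C^s s^s |D|^s + 2^{2s} |X|^{2s-1}` for an absolute constant `C > 0`. -/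
theorem stmt12 :
    ∃ C : ℝ, 0 < C ∧ ∀ (G : Type*) [AddCommGroup G] [Fintype G] [DecidableEq G]
      (M X D : Finset G), Dissociated D → M = X ∪ D →
      ∀ s : ℕ, 1 ≤ s →
        (Tk s M : ℝ) ≤ C ^ s * (s : ℝ) ^ s * (D.card : ℝ) ^ s +
          2 ^ (2 * s) * (X.card : ℝ) ^ (2 * s - 1) := by
  refine ⟨48, by norm_num, fun G _ _ _ M X D hD hM s hs₁ ↦ ?_⟩
  have hs : s ≠ 0 := Nat.one_le_iff_ne_zero.1 hs₁
  have hDX : AddDissociated ((D \ X : Finset G) : Set G) :=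
    hD.addDissociated_s12.subset (coe_subset.2 sdiff_subset)
  calc (Tk s M : ℝ) = Tk s (X ∪ D \ X) := by rw [hM, union_sdiff_self_eq_union]
    _ ≤ 2 ^ (2 * s - 1) * (Tk s X + Tk s (D \ X)) := Tk_union_le disjoint_sdiff s
    _ ≤ 2 ^ (2 * s) * (#X ^ (2 * s - 1) + (12 * s * #D) ^ s) := by
        gcongr
        · exact one_le_two
        · omega
        · exact_mod_cast Tk_le_card_pow X hs
        · exact (hDX.Tk_le hs).trans (by gcongr; exact sdiff_subset)
    _ = 48 ^ s * s ^ s * #D ^ s + 2 ^ (2 * s) * #X ^ (2 * s - 1) := by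
        have h48 : (2 : ℝ) ^ (2 * s) * (12 * s * #D) ^ s = 48 ^ s * s ^ s * #D ^ s := by
          rw [pow_mul, ← mul_pow, ← mul_pow, ← mul_pow]; ring_nf
        rw [mul_add, h48, add_comm]
end

section
/- Let A be a finite subset of an abelian group, s ≥ 4 an integer, and suppose T_s(A) ≥ C·10^s s^{2s} |A|^s for a suitable absolute constant C. Then the number T*_s(A) of nontrivial additive 2s-tuples satisfies T*_s(A) ≥ (1/2) T_s(A). -/
open Finset

/-- `TkStar s A`: the number of nontrivial additive `2s`-tuples, i.e. solutions of
`x_1 + ⋯ + x_s = x_{s+1} + ⋯ + x_{2s}` with all `2s` coordinates pairwise distinct. -/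
def TkStar {G : Type*} [AddCommGroup G] [DecidableEq G] (s : ℕ) (A : Finset G) : ℕ :=
  (((Fintype.piFinset fun _ : Fin s => A) ×ˢ Fintype.piFinset fun _ : Fin s => A).filter
    fun p => (∑ i, p.1 i = ∑ i, p.2 i) ∧
      ∀ i j : Fin s ⊕ Fin s, Sum.elim p.1 p.2 i = Sum.elim p.1 p.2 j → i = j).card

/-!
Write `T_k = T_k(A)`. Cauchy–Schwarz for collision counts makes `k ↦ T_k` log-convex, and since
`T_0 = 1` this gives `T_{s-2}^s ≤ T_s^{s-2}`. A trivial tuple has equal coordinates at one of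
fewer than `(2s)^2` pairs of positions. Fixing the common value `c ∈ A` and deleting the
coordinates equal to `c`, Cauchy–Schwarz bounds the tuples with a given coincidence by
`|A| √(T_{s-2} T_s)` when both positions are on the same side, and by `|A| T_{s-1}` otherwise,
which is no larger by log-convexity. With `C = 1` the hypothesis and `T_{s-2}^s ≤ T_s^{s-2}` give
`64 s^4 |A|^2 T_{s-2} ≤ T_s`, so the trivial tuples number at most `T_s / 2`.
-/

open Fintype

section Collisions

variable {α β γ : Type*} [DecidableEq γ]

theorem card_filter_eq_eq_sum_mul {s : Finset α} {u : Finset γ} {f : α → γ}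
    (hs : ∀ x ∈ s, f x ∈ u) (t : Finset β) (g : β → γ) :
    #{p ∈ s ×ˢ t | f p.1 = g p.2} = ∑ c ∈ u, #{x ∈ s | f x = c} * #{y ∈ t | g y = c} := by
  rw [card_eq_sum_card_fiberwise (f := fun p => f p.1)
    fun p hp => hs _ (mem_product.1 (mem_filter.1 hp).1).1]
  refine sum_congr rfl fun c _ => ?_
  rw [← card_product]
  congr 1
  ext ⟨x, y⟩
  simp only [mem_filter, mem_product]
  grind

theorem card_filter_eq_sq_le_mul (s : Finset α) (t : Finset β) (f : α → γ) (g : β → γ) :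
    #{p ∈ s ×ˢ t | f p.1 = g p.2} ^ 2 ≤
      #{p ∈ s ×ˢ s | f p.1 = f p.2} * #{p ∈ t ×ˢ t | g p.1 = g p.2} := by
  set u := s.image f ∪ t.image g
  have hs : ∀ x ∈ s, f x ∈ u := fun x hx => mem_union_left _ (mem_image_of_mem f hx)
  have ht : ∀ y ∈ t, g y ∈ u := fun y hy => mem_union_right _ (mem_image_of_mem g hy)
  simp only [card_filter_eq_eq_sum_mul hs, card_filter_eq_eq_sum_mul ht, ← sq]
  exact sum_mul_sq_le_sq_mul_sq _ _ _

theorem cons_mem_piFinset {s : Finset α} {n : ℕ} {a : α} {x : Fin n → α} (ha : a ∈ s)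
    (hx : x ∈ piFinset fun _ => s) : Fin.cons a x ∈ piFinset fun _ : Fin (n + 1) => s :=
  mem_piFinset.2 fun i => Fin.cases ha (mem_piFinset.1 hx) i

end Collisions

section SumMatches

variable {G : Type*} [AddCommGroup G] [DecidableEq G]

def sumMatches {ι κ : Type*} [Fintype ι] [Fintype κ] (X : Finset (ι → G))
    (Y : Finset (κ → G)) : ℕ :=
  #{p ∈ X ×ˢ Y | ∑ i, p.1 i = ∑ i, p.2 i}

theorem Tk_eq_sumMatches (k : ℕ) (A : Finset G) :
    Tk k A = sumMatches (piFinset fun _ : Fin k => A) (piFinset fun _ : Fin k => A) := rfl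

variable {ι κ : Type*} [Fintype ι] [Fintype κ]

theorem sumMatches_sq_le (X : Finset (ι → G)) (Y : Finset (κ → G)) :
    sumMatches X Y ^ 2 ≤ sumMatches X X * sumMatches Y Y :=
  card_filter_eq_sq_le_mul X Y _ _

theorem sumMatches_filter_filter (X : Finset (ι → G)) (Y : Finset (κ → G))
    (P : (ι → G) → Prop) (Q : (κ → G) → Prop) [DecidablePred P] [DecidablePred Q] :
    sumMatches {x ∈ X | P x} {y ∈ Y | Q y} =
      #{p ∈ X ×ˢ Y | ∑ i, p.1 i = ∑ i, p.2 i ∧ P p.1 ∧ Q p.2} := by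
  unfold sumMatches
  congr 1
  ext p
  simp only [mem_filter, mem_product]
  tauto

theorem sumMatches_self_le_of_forall_apply_eq {n : ℕ} {X : Finset (Fin (n + 1) → G)}
    {Y : Finset (Fin n → G)} {i : Fin (n + 1)} {c : G} (hc : ∀ x ∈ X, x i = c)
    (hY : ∀ x ∈ X, i.removeNth x ∈ Y) : sumMatches X X ≤ sumMatches Y Y := by
  have hrec : ∀ x ∈ X, x = i.insertNth c (i.removeNth x) := fun x hx => by
    rw [← hc x hx, Fin.insertNth_self_removeNth]
  refine card_le_card_of_injOn (fun p => (i.removeNth p.1, i.removeNth p.2)) ?_ ?_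
  · intro p hp
    simp only [mem_coe, mem_filter, mem_product] at hp ⊢
    obtain ⟨⟨hp1, hp2⟩, hsum⟩ := hp
    refine ⟨⟨hY _ hp1, hY _ hp2⟩, ?_⟩
    rw [Fin.sum_univ_succAbove _ i, Fin.sum_univ_succAbove _ i, hc _ hp1, hc _ hp2] at hsum
    exact add_left_cancel hsum
  · intro p hp q hq hpq
    simp only [mem_coe, mem_filter, mem_product, Prod.mk.injEq] at hp hq hpq
    exact Prod.ext (by rw [hrec _ hp.1.1, hrec _ hq.1.1, hpq.1])
      (by rw [hrec _ hp.1.2, hrec _ hq.1.2, hpq.2])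

end SumMatches

section Tk

variable {G : Type*} [AddCommGroup G] [DecidableEq G] (A : Finset G)

theorem sumMatches_filter_apply_eq_le {n : ℕ} (i : Fin (n + 1)) (c : G) :
    sumMatches {x ∈ piFinset (fun _ => A) | x i = c} {x ∈ piFinset (fun _ => A) | x i = c}
      ≤ Tk n A := by
  rw [Tk_eq_sumMatches]
  exact sumMatches_self_le_of_forall_apply_eq (fun _ hx => (mem_filter.1 hx).2)
    fun _ hx => (Fin.mem_piFinset_iff_pivot_removeNth i |>.1 (mem_filter.1 hx).1).2

theorem sumMatches_filter_apply_eq_apply_eq_le {n : ℕ} {i j : Fin (n + 2)} (hij : i ≠ j)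
    (c : G) :
    sumMatches {x ∈ piFinset (fun _ => A) | x i = c ∧ x j = c}
      {x ∈ piFinset (fun _ => A) | x i = c ∧ x j = c} ≤ Tk n A := by
  obtain ⟨i', rfl⟩ := Fin.exists_succAbove_eq hij
  refine (sumMatches_self_le_of_forall_apply_eq (fun _ hx => (mem_filter.1 hx).2.2)
    fun x hx => ?_).trans (sumMatches_filter_apply_eq_le A i' c)
  obtain ⟨hx, hxi, -⟩ := mem_filter.1 hx
  exact mem_filter.2 ⟨(Fin.mem_piFinset_iff_pivot_removeNth j |>.1 hx).2, hxi⟩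

theorem Tk_zero : Tk 0 A = 1 := by simp [Tk]

theorem Tk_pos {A : Finset G} (hA : A.Nonempty) (k : ℕ) : 0 < Tk k A := by
  obtain ⟨a, ha⟩ := hA
  exact card_pos.2 ⟨(fun _ => a, fun _ => a), mem_filter.2
    ⟨mem_product.2 ⟨mem_piFinset.2 fun _ => ha, mem_piFinset.2 fun _ => ha⟩, rfl⟩⟩

/-- `T_{k+1}` counts `x ∈ A^k`, `(y, a) ∈ A^{k+1} × A` with `∑ x = ∑ y - a`, and the
collisions of `(y, a) ↦ ∑ y - a` are counted by `T_{k+2}`; apply Cauchy–Schwarz. -/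
theorem Tk_succ_sq_le (k : ℕ) : Tk (k + 1) A ^ 2 ≤ Tk k A * Tk (k + 2) A := by
  have h := card_filter_eq_sq_le_mul (piFinset fun _ : Fin k => A)
    ((piFinset fun _ : Fin (k + 1) => A) ×ˢ A) (fun x => ∑ i, x i) fun q => ∑ i, q.1 i - q.2
  refine le_trans (Nat.pow_le_pow_left ?_ 2) (h.trans (Nat.mul_le_mul le_rfl ?_))
  · refine card_le_card_of_injOn (fun p => (Fin.tail p.1, (p.2, p.1 0))) ?_ ?_
    · intro p hp
      simp only [mem_coe, mem_filter, mem_product, Fin.mem_piFinset_iff_zero_tail] at hp ⊢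
      obtain ⟨⟨⟨h0, htail⟩, hp2⟩, hsum⟩ := hp
      refine ⟨⟨htail, hp2, h0⟩, ?_⟩
      rw [← hsum, Fin.sum_univ_succ]
      simp [Fin.tail]
    · intro p _ q _ hpq
      simp only [Prod.mk.injEq] at hpq
      refine Prod.ext ?_ hpq.2.1
      rw [← Fin.cons_self_tail p.1, ← Fin.cons_self_tail q.1, hpq.1, hpq.2.2]
  · refine card_le_card_of_injOn (fun p => (Fin.cons p.2.2 p.1.1, Fin.cons p.1.2 p.2.1)) ?_ ?_
    · intro p hp
      simp only [mem_coe, mem_filter, mem_product] at hp ⊢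
      obtain ⟨⟨⟨hp1, ha⟩, hp2, hb⟩, hsum⟩ := hp
      simp only [Fin.sum_cons]
      refine ⟨⟨cons_mem_piFinset hb hp1, cons_mem_piFinset ha hp2⟩, ?_⟩
      rw [sub_eq_sub_iff_add_eq_add] at hsum
      rw [add_comm, hsum, add_comm]
    · intro p _ q _ hpq
      simp only [Prod.mk.injEq, Fin.cons_inj] at hpq
      exact Prod.ext (Prod.ext hpq.1.2 hpq.2.1) (Prod.ext hpq.2.2 hpq.1.1)

def coincidences (s : ℕ) (A : Finset G) (i j : Fin s ⊕ Fin s) :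
    Finset ((Fin s → G) × (Fin s → G)) :=
  {p ∈ (piFinset fun _ => A) ×ˢ (piFinset fun _ => A) |
    ∑ t, p.1 t = ∑ t, p.2 t ∧ Sum.elim p.1 p.2 i = Sum.elim p.1 p.2 j}

theorem card_coincidences_fiber_sq_le {n : ℕ} {i j : Fin (n + 2) ⊕ Fin (n + 2)} (hij : i ≠ j)
    (c : G) : #{p ∈ coincidences (n + 2) A i j | Sum.elim p.1 p.2 i = c} ^ 2 ≤
      Tk n A * Tk (n + 2) A := by
  have hmixed : Tk (n + 1) A * Tk (n + 1) A ≤ Tk n A * Tk (n + 2) A := by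
    simpa only [sq] using Tk_succ_sq_le A n
  have hfiber : ∀ (P Q : (Fin (n + 2) → G) → Prop) [DecidablePred P] [DecidablePred Q],
      (∀ x y, (Sum.elim x y i = Sum.elim x y j ∧ Sum.elim x y i = c) ↔ P x ∧ Q y) →
      #{p ∈ coincidences (n + 2) A i j | Sum.elim p.1 p.2 i = c} ^ 2 ≤
        sumMatches {x ∈ piFinset (fun _ => A) | P x} {x ∈ piFinset (fun _ => A) | P x} *
          sumMatches {y ∈ piFinset (fun _ => A) | Q y} {y ∈ piFinset (fun _ => A) | Q y} := by
    intro P Q _ _ hPQ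
    convert sumMatches_sq_le _ _ using 2
    rw [sumMatches_filter_filter]
    congr 1
    ext p
    simp only [coincidences, mem_filter, and_assoc, ← hPQ]
  rcases i with i | i <;> rcases j with j | j <;>
    simp only [ne_eq, Sum.inl.injEq, Sum.inr.injEq, Sum.elim_inl, Sum.elim_inr] at hij hfiber
  · refine (hfiber (fun x => x i = c ∧ x j = c) (fun _ => True) fun x y => by grind).trans ?_
    rw [filter_true, ← Tk_eq_sumMatches]
    exact Nat.mul_le_mul (sumMatches_filter_apply_eq_apply_eq_le A hij c) le_rfl
  · refine (hfiber (· i = c) (· j = c) fun x y => by grind).trans (le_trans ?_ hmixed)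
    exact Nat.mul_le_mul (sumMatches_filter_apply_eq_le A i c)
      (sumMatches_filter_apply_eq_le A j c)
  · refine (hfiber (· j = c) (· i = c) fun x y => by grind).trans (le_trans ?_ hmixed)
    exact Nat.mul_le_mul (sumMatches_filter_apply_eq_le A j c)
      (sumMatches_filter_apply_eq_le A i c)
  · refine (hfiber (fun _ => True) (fun y => y i = c ∧ y j = c) fun x y => by grind).trans ?_
    rw [filter_true, ← Tk_eq_sumMatches, mul_comm]
    exact Nat.mul_le_mul (sumMatches_filter_apply_eq_apply_eq_le A hij c) le_rfl

theorem card_coincidences_le {n : ℕ} {i j : Fin (n + 2) ⊕ Fin (n + 2)} (hij : i ≠ j) :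
    (#(coincidences (n + 2) A i j) : ℝ) ≤ #A * √(Tk n A * Tk (n + 2) A) := by
  have hA : ∀ p ∈ coincidences (n + 2) A i j, Sum.elim p.1 p.2 i ∈ A := by
    intro p hp
    obtain ⟨⟨h1, h2⟩, -⟩ := mem_filter.1 hp |>.imp_left mem_product.1
    cases i with
    | inl i => exact mem_piFinset.1 h1 i
    | inr i => exact mem_piFinset.1 h2 i
  rw [card_eq_sum_card_fiberwise hA, Nat.cast_sum, ← nsmul_eq_mul]
  refine sum_le_card_nsmul _ _ _ fun c _ => Real.le_sqrt_of_sq_le ?_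
  exact_mod_cast card_coincidences_fiber_sq_le A hij c

theorem Tk_le_TkStar_add_sum_card_coincidences (s : ℕ) :
    Tk s A ≤ TkStar s A + ∑ ij ∈ (univ : Finset (Fin s ⊕ Fin s)).offDiag,
      #(coincidences s A ij.1 ij.2) := by
  set S := {p ∈ (piFinset fun _ : Fin s => A) ×ˢ (piFinset fun _ : Fin s => A) |
    ∑ i, p.1 i = ∑ i, p.2 i}
  set Inj := fun p : (Fin s → G) × (Fin s → G) =>
    ∀ i j : Fin s ⊕ Fin s, Sum.elim p.1 p.2 i = Sum.elim p.1 p.2 j → i = j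
  have hstar : TkStar s A = #{p ∈ S | Inj p} := by rw [filter_filter]; rfl
  have htriv :
      {p ∈ S | ¬ Inj p} ⊆ univ.offDiag.biUnion fun ij => coincidences s A ij.1 ij.2 := by
    intro p hp
    obtain ⟨hp, hninj⟩ := mem_filter.1 hp
    obtain ⟨i, j, heq, hne⟩ : ∃ i j, Sum.elim p.1 p.2 i = Sum.elim p.1 p.2 j ∧ i ≠ j := by
      simpa only [Inj, not_forall, exists_prop] using hninj
    obtain ⟨hmem, hsum⟩ := mem_filter.1 hp
    exact mem_biUnion.2 ⟨(i, j), mem_offDiag.2 ⟨mem_univ _, mem_univ _, hne⟩,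
      mem_filter.2 ⟨hmem, hsum, heq⟩⟩
  rw [Tk, ← card_filter_add_card_filter_not (s := S) Inj, ← hstar]
  exact Nat.add_le_add_left ((card_le_card htriv).trans card_biUnion_le) _

theorem Tk_le_TkStar_add_mul_sqrt (n : ℕ) :
    (Tk (n + 2) A : ℝ) ≤
      TkStar (n + 2) A + (2 * (n + 2 : ℕ) : ℝ) ^ 2 * (#A * √(Tk n A * Tk (n + 2) A)) := by
  have hcard : ((univ : Finset (Fin (n + 2) ⊕ Fin (n + 2))).offDiag.card : ℝ) ≤
      (2 * (n + 2 : ℕ) : ℝ) ^ 2 := by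
    have : #(univ : Finset (Fin (n + 2) ⊕ Fin (n + 2))).offDiag ≤ (2 * (n + 2)) ^ 2 := by
      rw [offDiag_card, card_univ, Fintype.card_sum, Fintype.card_fin]
      exact (Nat.sub_le _ _).trans_eq (by ring)
    exact_mod_cast this
  have hcoinc : ∀ ij ∈ (univ : Finset (Fin (n + 2) ⊕ Fin (n + 2))).offDiag,
      (#(coincidences (n + 2) A ij.1 ij.2) : ℝ) ≤ #A * √(Tk n A * Tk (n + 2) A) :=
    fun ij hij => card_coincidences_le A (mem_offDiag.1 hij).2.2
  calc (Tk (n + 2) A : ℝ)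
      ≤ TkStar (n + 2) A + ∑ ij ∈ (univ : Finset (Fin (n + 2) ⊕ Fin (n + 2))).offDiag,
          (#(coincidences (n + 2) A ij.1 ij.2) : ℝ) := by
        exact_mod_cast Tk_le_TkStar_add_sum_card_coincidences A (n + 2)
    _ ≤ TkStar (n + 2) A + #(univ : Finset (Fin (n + 2) ⊕ Fin (n + 2))).offDiag *
          (#A * √(Tk n A * Tk (n + 2) A)) := by
        rw [← nsmul_eq_mul]
        gcongr
        exact sum_le_card_nsmul _ _ _ hcoinc
    _ ≤ _ := by gcongr

end Tk

theorem pow_add_le_pow_mul_pow_of_sq_le_mul {t : ℕ → ℝ} (hpos : ∀ k, 0 < t k)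
    (hconv : ∀ k, t (k + 1) ^ 2 ≤ t k * t (k + 2)) (a n l : ℕ) :
    t (a + n) ^ (n + l) ≤ t a ^ l * t (a + n + l) ^ n := by
  set r : ℕ → ℝ := fun k => t (k + 1) / t k
  have hr : ∀ k, 0 ≤ r k := fun k => (div_pos (hpos _) (hpos _)).le
  have hstep : ∀ k, t (k + 1) = t k * r k := fun k => by
    simp only [r]; field_simp [(hpos k).ne']
  have hmono : Monotone r := monotone_nat_of_le_succ fun k => by
    simp only [r]
    rw [div_le_div_iff₀ (hpos k) (hpos (k + 1))]
    nlinarith [hconv k]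
  have hlow : ∀ k l, t k * r k ^ l ≤ t (k + l) := by
    intro k l
    induction l with
    | zero => simp
    | succ l ih =>
      calc t k * r k ^ (l + 1) = t k * r k ^ l * r k := by ring
        _ ≤ t (k + l) * r (k + l) := mul_le_mul ih (hmono (by omega)) (hr _) (hpos _).le
        _ = t (k + (l + 1)) := (hstep _).symm
  have hup : ∀ k n, t (k + n) ≤ t k * r (k + n) ^ n := by
    intro k n
    induction n with
    | zero => simp
    | succ n ih =>
      calc t (k + (n + 1)) = t (k + n) * r (k + n) := hstep _
        _ ≤ t k * r (k + n) ^ n * r (k + n) := mul_le_mul_of_nonneg_right ih (hr _)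
        _ ≤ t k * r (k + (n + 1)) ^ (n + 1) := by
          rw [mul_assoc, ← pow_succ]
          exact mul_le_mul_of_nonneg_left (pow_le_pow_left₀ (hr _) (hmono (by omega)) _)
            (hpos _).le
  calc t (a + n) ^ (n + l) = t (a + n) ^ l * t (a + n) ^ n := by ring
    _ ≤ (t a * r (a + n) ^ n) ^ l * t (a + n) ^ n :=
      mul_le_mul_of_nonneg_right (pow_le_pow_left₀ (hpos _).le (hup a n) l)
        (pow_nonneg (hpos _).le n)
    _ = t a ^ l * (t (a + n) * r (a + n) ^ l) ^ n := by ring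
    _ ≤ t a ^ l * t (a + n + l) ^ n :=
      mul_le_mul_of_nonneg_left (pow_le_pow_left₀
        (mul_nonneg (hpos _).le (pow_nonneg (hr _) _)) (hlow _ _) n) (pow_nonneg (hpos _).le l)

theorem sq_mul_sqrt_le_half {a σ T₀ T : ℝ} {m : ℕ} (ha : 0 ≤ a) (hT₀ : 0 ≤ T₀)
    (hT : 0 ≤ T) (hconv : T₀ ^ (m + 2) ≤ T ^ m)
    (hlarge : 10 ^ (m + 2) * σ ^ (2 * (m + 2)) * a ^ (m + 2) ≤ T) :
    (2 * σ) ^ 2 * (a * √(T₀ * T)) ≤ T / 2 := by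
  have hsmall : (8 * σ ^ 2 * a) ^ (m + 2) ≤ T :=
    calc (8 * σ ^ 2 * a) ^ (m + 2) = 8 ^ (m + 2) * (σ ^ 2) ^ (m + 2) * a ^ (m + 2) := by
          rw [mul_pow, mul_pow]
      _ ≤ 10 ^ (m + 2) * (σ ^ 2) ^ (m + 2) * a ^ (m + 2) := by gcongr; norm_num
      _ ≤ T := by rwa [← pow_mul]
  have key : (8 * σ ^ 2 * a) ^ 2 * T₀ ≤ T := by
    refine le_of_pow_le_pow_left₀ (n := m + 2) (by omega) hT ?_
    calc ((8 * σ ^ 2 * a) ^ 2 * T₀) ^ (m + 2)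
        = ((8 * σ ^ 2 * a) ^ (m + 2)) ^ 2 * T₀ ^ (m + 2) := by
          rw [mul_pow, ← pow_mul, ← pow_mul, mul_comm 2]
      _ ≤ T ^ 2 * T ^ m := by gcongr
      _ = T ^ (m + 2) := by ring
  calc (2 * σ) ^ 2 * (a * √(T₀ * T)) = √((8 * σ ^ 2 * a) ^ 2 * (T₀ * T)) / 2 := by
        rw [Real.sqrt_mul (sq_nonneg _), Real.sqrt_sq (by positivity)]
        ring
    _ ≤ √(T * T) / 2 := by
      gcongr √?_ / 2
      rw [← mul_assoc]
      exact mul_le_mul_of_nonneg_right key hT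
    _ = T / 2 := by rw [Real.sqrt_mul_self hT]

/-- If `s ≥ 4` and `T_s(A) ≥ C · 10^s s^{2s} |A|^s` for a suitable absolute constant `C`,
then `T*_s(A) ≥ (1/2) T_s(A)`. -/
theorem stmt14 :
    ∃ C : ℝ, 0 < C ∧ ∀ (G : Type*) [AddCommGroup G] [DecidableEq G]
      (A : Finset G) (s : ℕ), 4 ≤ s →
      C * 10 ^ s * (s : ℝ) ^ (2 * s) * (A.card : ℝ) ^ s ≤ (Tk s A : ℝ) →
      (Tk s A : ℝ) ≤ 2 * (TkStar s A : ℝ) := by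
  refine ⟨1, one_pos, fun G _ _ A s hs hlarge => ?_⟩
  obtain ⟨n, rfl⟩ : ∃ n, s = n + 2 := ⟨s - 2, by omega⟩
  obtain rfl | hA := A.eq_empty_or_nonempty
  · simp [Tk]
  have hconv : (Tk n A : ℝ) ^ (n + 2) ≤ (Tk (n + 2) A : ℝ) ^ n := by
    simpa [Tk_zero] using pow_add_le_pow_mul_pow_of_sq_le_mul (t := fun k => (Tk k A : ℝ))
      (fun k => by exact_mod_cast Tk_pos hA k) (fun k => by exact_mod_cast Tk_succ_sq_le A k)
      0 n 2
  rw [one_mul] at hlarge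
  have := sq_mul_sqrt_le_half (by positivity) (by positivity) (by positivity) hconv hlarge
  linarith [Tk_le_TkStar_add_mul_sqrt A n]
end

section
/- For any finite subset A of an abelian group, dim(A) ≤ d_*(A) · log₂(2·dim(A) + 1), and consequently dim(A) ≪ d_*(A) log d_*(A) when d_*(A) ≥ 2. -/
open Finset

/-- The additive dimension of `A`: the maximal cardinality of a dissociated subset of `A`. -/
noncomputable def addDim {G : Type*} [AddCommGroup G] (A : Finset G) : ℕ :=
  @Nat.findGreatest (fun n => ∃ Λ ⊆ A, Dissociated Λ ∧ Λ.card = n)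
    (Classical.decPred _) A.card

/-- `Span S = {∑_{s ∈ S} ε_s s : ε_s ∈ {0, −1, 1}}`. -/
def SpanSet {G : Type*} [AddCommGroup G] (S : Finset G) : Set G :=
  {x | ∃ ε : G → ℤ, (∀ g, ε g = -1 ∨ ε g = 0 ∨ ε g = 1) ∧ x = ∑ g ∈ S, ε g • g}

/-- `d_*(A) = min{|S| : A ⊆ Span S}`, `S` an arbitrary finite set. -/
noncomputable def dstar {G : Type*} [AddCommGroup G] (A : Finset G) : ℕ :=
  sInf {n | ∃ S : Finset G, ↑A ⊆ SpanSet S ∧ S.card = n}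

lemma subsetSum_inj {G : Type*} [AddCommGroup G] {Λ : Finset G} (hΛ : Dissociated Λ)
    {T T' : Finset G} (hT : T ⊆ Λ) (hT' : T' ⊆ Λ)
    (h : ∑ g ∈ T, g = ∑ g ∈ T', g) : T = T' := by
  classical
  set ε : G → ℤ := fun g => (if g ∈ T then (1:ℤ) else 0) - (if g ∈ T' then 1 else 0) with hε
  have key : ∀ g, ε g = 0 := by
    apply hΛ
    · intro g
      simp only [hε]
      by_cases h1 : g ∈ T <;> by_cases h2 : g ∈ T' <;> simp [h1, h2]
    · intro g hg
      simp only [hε]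
      rw [if_neg (fun hh => hg (hT hh)), if_neg (fun hh => hg (hT' hh)), sub_zero]
    · simp only [hε, sub_smul, ite_smul, one_smul, zero_smul, Finset.sum_sub_distrib,
        Finset.sum_ite_mem, Finset.inter_eq_right.mpr hT, Finset.inter_eq_right.mpr hT']
      rw [h, sub_self]
  ext g
  have := key g
  simp only [hε] at this
  by_cases h1 : g ∈ T <;> by_cases h2 : g ∈ T' <;> simp [h1, h2] at this ⊢

lemma counting {G : Type*} [AddCommGroup G] {A Λ S : Finset G} (hΛA : Λ ⊆ A)
    (hΛ : Dissociated Λ) (hAS : ↑A ⊆ SpanSet S) :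
    2 ^ Λ.card ≤ (2 * Λ.card + 1) ^ S.card := by
  classical
  set d : ℕ := Λ.card with hd
  -- choose representations
  have hrep : ∀ g ∈ A, ∃ ε : G → ℤ, (∀ s, ε s = -1 ∨ ε s = 0 ∨ ε s = 1) ∧
      g = ∑ s ∈ S, ε s • s := fun g hg => hAS hg
  choose! ε hε1 hε2 using hrep
  -- the coefficient map
  set F : Finset G → ((a : G) → a ∈ S → ℤ) :=
    fun T => fun s _ => ∑ g ∈ T, ε g s with hF
  have hmaps : ∀ T ∈ Λ.powerset, F T ∈ S.pi (fun _ => Finset.Icc (-(d:ℤ)) (d:ℤ)) := by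
    intro T hTmem
    rw [Finset.mem_powerset] at hTmem
    rw [Finset.mem_pi]
    intro s hs
    rw [Finset.mem_Icc, ← abs_le]
    calc |∑ g ∈ T, ε g s| ≤ ∑ g ∈ T, |ε g s| := Finset.abs_sum_le_sum_abs _ _
      _ ≤ ∑ _g ∈ T, 1 := by
          apply Finset.sum_le_sum
          intro g hg
          rcases hε1 g (hΛA (hTmem hg)) s with h | h | h <;> simp [h]
      _ = T.card := by simp
      _ ≤ (d:ℤ) := by exact_mod_cast Finset.card_le_card hTmem
  have hinj : Set.InjOn F ↑Λ.powerset := by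
    intro T hTm T' hTm' hFeq
    simp only [Finset.mem_coe, Finset.mem_powerset] at hTm hTm'
    apply subsetSum_inj hΛ hTm hTm'
    have hsum : ∀ T'' ⊆ Λ, ∑ g ∈ T'', g = ∑ s ∈ S, (∑ g ∈ T'', ε g s) • s := by
      intro T'' hT''
      calc ∑ g ∈ T'', g = ∑ g ∈ T'', ∑ s ∈ S, ε g s • s :=
            Finset.sum_congr rfl fun g hg => hε2 g (hΛA (hT'' hg))
        _ = ∑ s ∈ S, ∑ g ∈ T'', ε g s • s := Finset.sum_comm
        _ = ∑ s ∈ S, (∑ g ∈ T'', ε g s) • s := by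
            exact Finset.sum_congr rfl fun s _ => (Finset.sum_smul).symm
    rw [hsum T hTm, hsum T' hTm']
    apply Finset.sum_congr rfl
    intro s hs
    have : F T s hs = F T' s hs := by rw [hFeq]
    simp only [hF] at this
    rw [this]
  have hcard := Finset.card_le_card_of_injOn F hmaps hinj
  rwa [Finset.card_powerset, Finset.card_pi, Finset.prod_const, Int.card_Icc,
    show ((d:ℤ) + 1 - -(d:ℤ)).toNat = 2 * d + 1 by omega] at hcard

lemma log_le_two_sqrt {t : ℝ} (ht : 0 < t) : Real.log t ≤ 2 * Real.sqrt t := by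
  have h1 : Real.log (Real.sqrt t) ≤ Real.sqrt t - 1 :=
    Real.log_le_sub_one_of_pos (Real.sqrt_pos.mpr ht)
  rw [Real.log_sqrt ht.le] at h1
  nlinarith [Real.sqrt_nonneg t]

lemma real_part (d m : ℕ) (hm : 2 ≤ m) (h : (d:ℝ) ≤ (m:ℝ) * Real.logb 2 (2*(d:ℝ)+1)) :
    (d:ℝ) ≤ 14 * (m:ℝ) * Real.log m := by
  have hm2 : (2:ℝ) ≤ (m:ℝ) := by exact_mod_cast hm
  have hlogm : 0 < Real.log m := Real.log_pos (by linarith)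
  rcases Nat.eq_zero_or_pos d with hd | hd
  · rw [hd]; push_cast; nlinarith
  have hx1 : (1:ℝ) ≤ (d:ℝ) := by exact_mod_cast hd
  set x : ℝ := (d:ℝ) with hxdef
  have hxpos : 0 < x := by linarith
  have hlog2 : (2:ℝ)/3 ≤ Real.log 2 := by
    have := Real.log_two_gt_d9; linarith
  have hlog2pos : 0 < Real.log 2 := by linarith
  -- Step 1: logb 2 (2x+1) ≤ 6 √x
  have hsq : Real.sqrt (2*x+1) ≤ 2 * Real.sqrt x := by
    have h4 : Real.sqrt (2*x+1) ≤ Real.sqrt (4*x) := Real.sqrt_le_sqrt (by linarith)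
    have : Real.sqrt (4*x) = 2 * Real.sqrt x := by
      rw [Real.sqrt_mul (by norm_num) x, show (4:ℝ) = 2^2 by norm_num,
        Real.sqrt_sq (by norm_num : (0:ℝ) ≤ 2)]
    linarith
  have hlogx : Real.log (2*x+1) ≤ 4 * Real.sqrt x := by
    have := log_le_two_sqrt (show (0:ℝ) < 2*x+1 by linarith)
    linarith
  have hlb : Real.logb 2 (2*x+1) ≤ 6 * Real.sqrt x := by
    rw [Real.logb, div_le_iff₀ hlog2pos]
    nlinarith [Real.sqrt_nonneg x]
  -- Step 2: x ≤ 36 m²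
  have hsx : Real.sqrt x ≤ 6 * m := by
    have hxm : x ≤ 6 * m * Real.sqrt x := by
      calc x ≤ m * Real.logb 2 (2*x+1) := h
        _ ≤ m * (6 * Real.sqrt x) := by
            apply mul_le_mul_of_nonneg_left hlb (by positivity)
        _ = 6 * m * Real.sqrt x := by ring
    have hsx1 : (1:ℝ) ≤ Real.sqrt x := by
      rw [show (1:ℝ) = Real.sqrt 1 by simp]; exact Real.sqrt_le_sqrt hx1
    have hxs : x = Real.sqrt x * Real.sqrt x := (Real.mul_self_sqrt hxpos.le).symm
    nlinarith
  have hx36 : x ≤ 36 * m^2 := by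
    have := Real.sq_sqrt hxpos.le
    nlinarith [Real.sqrt_nonneg x]
  -- Step 3: logb 2 (2x+1) ≤ 9 logb 2 m
  have hL1 : (1:ℝ) ≤ Real.logb 2 (m:ℝ) := by
    rw [show (1:ℝ) = Real.logb 2 2 by simp]
    exact Real.logb_le_logb_of_le (by norm_num) (by norm_num) hm2
  have hmono : Real.logb 2 (2*x+1) ≤ Real.logb 2 (128 * (m:ℝ)^2) := by
    apply Real.logb_le_logb_of_le (by norm_num) (by linarith)
    nlinarith
  have h128 : Real.logb 2 (128 * (m:ℝ)^2) = 7 + 2 * Real.logb 2 m := by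
    rw [Real.logb_mul (by norm_num) (by positivity),
      show (128:ℝ) = 2^(7:ℕ) by norm_num, Real.logb_pow, Real.logb_pow,
      Real.logb_self_eq_one (by norm_num)]
    push_cast; ring
  have h9 : Real.logb 2 (2*x+1) ≤ 9 * Real.logb 2 m := by
    rw [h128] at hmono; linarith
  -- conclude
  have : x ≤ m * (9 * Real.logb 2 m) :=
    h.trans (mul_le_mul_of_nonneg_left h9 (by positivity))
  have key : 9 * (Real.log ↑m / Real.log 2) ≤ 14 * Real.log ↑m := by
    rw [show 9 * (Real.log ↑m / Real.log 2) = 9 * Real.log ↑m / Real.log 2 by ring,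
      div_le_iff₀ hlog2pos]
    nlinarith
  rw [Real.logb] at this
  calc x ≤ ↑m * (9 * (Real.log ↑m / Real.log 2)) := this
    _ ≤ ↑m * (14 * Real.log ↑m) := mul_le_mul_of_nonneg_left key (by positivity)
    _ = 14 * ↑m * Real.log ↑m := by ring

lemma nat_to_real {d m : ℕ} (h : 2 ^ d ≤ (2 * d + 1) ^ m) :
    (d:ℝ) ≤ (m:ℝ) * Real.logb 2 (2*(d:ℝ)+1) := by
  have hR : (2:ℝ) ^ d ≤ (2*(d:ℝ)+1) ^ m := by exact_mod_cast h
  have hlog := Real.log_le_log (by positivity) hR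
  rw [Real.log_pow, Real.log_pow] at hlog
  have hlog2pos : 0 < Real.log 2 := Real.log_pos (by norm_num)
  rw [Real.logb, show (m:ℝ) * (Real.log (2*(d:ℝ)+1) / Real.log 2)
      = (m * Real.log (2*(d:ℝ)+1)) / Real.log 2 by ring, le_div_iff₀ hlog2pos]
  exact hlog

lemma addDim_spec {G : Type*} [AddCommGroup G] (A : Finset G) :
    ∃ Λ ⊆ A, Dissociated Λ ∧ Λ.card = addDim A := by
  have h0 : ∃ Λ ⊆ A, Dissociated Λ ∧ Λ.card = 0 :=
    ⟨∅, Finset.empty_subset _, fun ε h1 h2 h3 g => h2 g (Finset.notMem_empty g), rfl⟩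
  letI : DecidablePred (fun n => ∃ Λ ⊆ A, Dissociated Λ ∧ Λ.card = n) := Classical.decPred _
  exact Nat.findGreatest_spec (P := fun n => ∃ Λ ⊆ A, Dissociated Λ ∧ Λ.card = n) (Nat.zero_le A.card) h0

lemma dstar_spec {G : Type*} [AddCommGroup G] (A : Finset G) :
    ∃ S : Finset G, ↑A ⊆ SpanSet S ∧ S.card = dstar A := by
  have hne : {n | ∃ S : Finset G, ↑A ⊆ SpanSet S ∧ S.card = n}.Nonempty := by
    classical
    refine ⟨A.card, A, ?_, rfl⟩
    intro x hx
    simp only [Finset.mem_coe] at hx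
    refine ⟨fun g => if g = x then 1 else 0, fun g => by by_cases h : g = x <;> simp [h], ?_⟩
    simp only [ite_smul, one_smul, zero_smul]
    rw [Finset.sum_ite_eq' A x (fun g => g), if_pos hx]
  exact Nat.sInf_mem hne

/-- `dim A ≤ d_*(A) log₂(2 dim A + 1)`; consequently `dim A ≪ d_*(A) log d_*(A)`
whenever `d_*(A) ≥ 2`. -/
theorem stmt15 :
    ∃ C : ℝ, 0 < C ∧ ∀ (G : Type*) [AddCommGroup G] (A : Finset G),
      ((addDim A : ℝ) ≤ (dstar A : ℝ) * Real.logb 2 (2 * (addDim A : ℝ) + 1)) ∧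
      (2 ≤ dstar A → (addDim A : ℝ) ≤ C * (dstar A : ℝ) * Real.log (dstar A)) := by
  refine ⟨14, by norm_num, fun G _ A => ?_⟩
  obtain ⟨Λ, hΛA, hΛ, hΛcard⟩ := addDim_spec A
  obtain ⟨S, hAS, hScard⟩ := dstar_spec A
  have hcount := counting hΛA hΛ hAS
  rw [hΛcard, hScard] at hcount
  have h1 := nat_to_real hcount
  refine ⟨h1, fun hm => ?_⟩
  have := real_part (addDim A) (dstar A) hm h1
  linarith
end
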